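/- arXiv:2506.23299 — 6 statements merged into one kernel-verified Lean document; each statement's English description precedes it below -/
import Mathlib

section
/- If κ_{2i−1,2i} = κ_{2j−1,2j} = k for indices i ≠ j, then Ψ¹_{i,j} = (γ_{2i} p_{2j−1} − γ_{2j−1} p_{2i}) − (γ_{2i−1} p_{2j} − γ_{2j} p_{2i−1}) − s k (γ_{2i−1} γ_{2j−1} + γ_{2i} γ_{2j}) is a first integral of the block magnetic geodesic equations. -/
/-- if `κ_{2i−1,2i} = κ_{2j−1,2j} = k` with `i ≠ j`, then
`Ψ¹_{i,j} = (γ_{2i}p_{2j−1} − γ_{2j−1}p_{2i}) − (γ_{2i−1}p_{2j} − γ_{2j}p_{2i−1})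
− sk(γ_{2i−1}γ_{2j−1} + γ_{2i}γ_{2j})` is a first integral of the block
magnetic geodesic equations. Here `γ1 r, γ2 r, p1 r, p2 r` denote
`γ_{2r−1}, γ_{2r}, p_{2r−1}, p_{2r}` and `κ r` denotes `κ_{2r−1,2r}`. -/
theorem magnetic_Psi1_first_integral
    (ℓ : ℕ) (γ1 γ2 p1 p2 : ℝ → Fin ℓ → ℝ) (κ : Fin ℓ → ℝ) (s k : ℝ)
    (μ : ℝ → ℝ) (i j : Fin ℓ) (hij : i ≠ j) (hki : κ i = k) (hkj : κ j = k)
    (hγ1 : ∀ r t, HasDerivAt (fun τ => γ1 τ r) (p1 t r) t)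
    (hγ2 : ∀ r t, HasDerivAt (fun τ => γ2 τ r) (p2 t r) t)
    (hp1 : ∀ r t, HasDerivAt (fun τ => p1 τ r) (s * κ r * p2 t r + μ t * γ1 t r) t)
    (hp2 : ∀ r t, HasDerivAt (fun τ => p2 τ r) (-(s * κ r * p1 t r) + μ t * γ2 t r) t) :
    ∀ t, HasDerivAt (fun τ =>
      (γ2 τ i * p1 τ j - γ1 τ j * p2 τ i) - (γ1 τ i * p2 τ j - γ2 τ j * p1 τ i)
        - s * k * (γ1 τ i * γ1 τ j + γ2 τ i * γ2 τ j)) 0 t := by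
  intro t
  have h := ((((hγ2 i t).mul (hp1 j t)).sub ((hγ1 j t).mul (hp2 i t))).sub
      (((hγ1 i t).mul (hp2 j t)).sub ((hγ2 j t).mul (hp1 i t)))).sub
      ((((hγ1 i t).mul (hγ1 j t)).add ((hγ2 i t).mul (hγ2 j t))).const_mul (s * k))
  convert h using 1
  · rfl
  · rfl
  · rfl
  rw [hki, hkj]
  ring
end

section
/- If κ_{2i−1,2i} = κ_{2j−1,2j} = k for indices i ≠ j, then Ψ²_{i,j} = (γ_{2i−1} p_{2j−1} − γ_{2j−1} p_{2i−1}) + (γ_{2i} p_{2j} − γ_{2j} p_{2i}) − s k (γ_{2i−1} γ_{2j} − γ_{2i} γ_{2j−1}) is a first integral of the block magnetic geodesic equations. -/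
/-- if `κ_{2i−1,2i} = κ_{2j−1,2j} = k` with `i ≠ j`, then
`Ψ²_{i,j} = (γ_{2i−1}p_{2j−1} − γ_{2j−1}p_{2i−1}) + (γ_{2i}p_{2j} − γ_{2j}p_{2i})
− sk(γ_{2i−1}γ_{2j} − γ_{2i}γ_{2j−1})` is a first integral of the block
magnetic geodesic equations. Here `γ1 r, γ2 r, p1 r, p2 r` denote
`γ_{2r−1}, γ_{2r}, p_{2r−1}, p_{2r}` and `κ r` denotes `κ_{2r−1,2r}`. -/
theorem magnetic_Psi2_first_integral
    (ℓ : ℕ) (γ1 γ2 p1 p2 : ℝ → Fin ℓ → ℝ) (κ : Fin ℓ → ℝ) (s k : ℝ)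
    (μ : ℝ → ℝ) (i j : Fin ℓ) (hij : i ≠ j) (hki : κ i = k) (hkj : κ j = k)
    (hγ1 : ∀ r t, HasDerivAt (fun τ => γ1 τ r) (p1 t r) t)
    (hγ2 : ∀ r t, HasDerivAt (fun τ => γ2 τ r) (p2 t r) t)
    (hp1 : ∀ r t, HasDerivAt (fun τ => p1 τ r) (s * κ r * p2 t r + μ t * γ1 t r) t)
    (hp2 : ∀ r t, HasDerivAt (fun τ => p2 τ r) (-(s * κ r * p1 t r) + μ t * γ2 t r) t) :
    ∀ t, HasDerivAt (fun τ =>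
      (γ1 τ i * p1 τ j - γ1 τ j * p1 τ i) + (γ2 τ i * p2 τ j - γ2 τ j * p2 τ i)
        - s * k * (γ1 τ i * γ2 τ j - γ2 τ i * γ1 τ j)) 0 t := by
  intro t
  have h := ((((hγ1 i t).mul (hp1 j t)).sub ((hγ1 j t).mul (hp1 i t))).add
      (((hγ2 i t).mul (hp2 j t)).sub ((hγ2 j t).mul (hp2 i t)))).sub
      ((((hγ1 i t).mul (hγ2 j t)).sub ((hγ2 i t).mul (hγ1 j t))).const_mul (s * k))
  refine h.congr_deriv ?_
  rw [hki, hkj]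
  ring
end

section
/- Along solutions of γ' = p, p' = sκp + μγ, the magnetic momentum map Φ_s = γ∧p + (s/2)(κ γγᵀ + γγᵀ κ) satisfies Φ_s' = (s/2)[κ, Φ_0], where Φ_0 = γ∧p = γpᵀ − pγᵀ and [A,B] = AB − BA. -/
/-- The magnetic momentum map `Φ_s = γ∧p + (s/2)(κγγᵀ + γγᵀκ)`. -/
noncomputable def magMomentum {n : ℕ} (s : ℝ) (κ : Matrix (Fin n) (Fin n) ℝ)
    (γ p : Fin n → ℝ) : Matrix (Fin n) (Fin n) ℝ :=
  Matrix.vecMulVec γ p - Matrix.vecMulVec p γ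
    + (s / 2) • (κ * Matrix.vecMulVec γ γ + Matrix.vecMulVec γ γ * κ)

/-- along solutions of `γ' = p`, `p' = sκp + μγ`, the magnetic
momentum map `Φ_s` satisfies `Φ_s' = (s/2)[κ, Φ_0]`, where `Φ_0 = γ∧p`. -/
theorem magnetic_momentum_derivative
    (n : ℕ) (γ p : ℝ → Fin n → ℝ) (κ : Matrix (Fin n) (Fin n) ℝ)
    (hκ : κ.transpose = -κ) (s : ℝ) (μ : ℝ → ℝ)
    (hγ : ∀ i t, HasDerivAt (fun τ => γ τ i) (p t i) t)
    (hp : ∀ i t, HasDerivAt (fun τ => p τ i)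
      (s * κ.mulVec (p t) i + μ t * γ t i) t) :
    ∀ i j t, HasDerivAt (fun τ => magMomentum s κ (γ τ) (p τ) i j)
      (((s / 2) • (κ * (magMomentum 0 κ (γ t) (p t))
        - (magMomentum 0 κ (γ t) (p t)) * κ)) i j) t := by
  intro i j t
  have h2 : ∀ a b : Fin n, κ a b = - κ b a := by
    intro a b
    have := congrFun (congrFun hκ b) a
    simpa [Matrix.transpose_apply] using this
  have hfun : (fun τ => magMomentum s κ (γ τ) (p τ) i j)
      = fun τ => (γ τ i * p τ j - p τ i * γ τ j)
        + (s/2) * ((∑ k, κ i k * (γ τ k * γ τ j)) + (∑ k, (γ τ i * γ τ k) * κ k j)) := by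
    funext τ
    simp [magMomentum, Matrix.add_apply, Matrix.sub_apply, Matrix.smul_apply,
      Matrix.mul_apply, Matrix.vecMulVec_apply, smul_eq_mul, mul_add]
  rw [hfun]
  have h1 := (((hγ i t).mul (hp j t)).sub ((hp i t).mul (hγ j t)))
  have hsum1 : HasDerivAt (fun τ => ∑ k, κ i k * (γ τ k * γ τ j))
      (∑ k, κ i k * (p t k * γ t j + γ t k * p t j)) t :=
    HasDerivAt.fun_sum fun k _ => ((hγ k t).mul (hγ j t)).const_mul _
  have hsum2 : HasDerivAt (fun τ => ∑ k, (γ τ i * γ τ k) * κ k j)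
      (∑ k, (p t i * γ t k + γ t i * p t k) * κ k j) t :=
    HasDerivAt.fun_sum fun k _ => ((hγ i t).mul (hγ k t)).mul_const _
  have H := h1.add ((hsum1.add hsum2).const_mul (s/2))
  refine H.congr_deriv ?_
  simp only [magMomentum, Matrix.smul_apply, Matrix.sub_apply, Matrix.add_apply,
    Matrix.mul_apply, Matrix.vecMulVec_apply, Matrix.mulVec, dotProduct, smul_eq_mul, zero_div, zero_mul, add_zero]
  have S1 : ∑ x, κ i x * (γ t x * p t j - p t x * γ t j)
      = p t j * (∑ x, κ i x * γ t x) - γ t j * (∑ x, κ i x * p t x) := by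
    rw [Finset.mul_sum, Finset.mul_sum, ← Finset.sum_sub_distrib]
    exact Finset.sum_congr rfl fun x _ => by ring
  have S2 : ∑ x, (γ t i * p t x - p t i * γ t x) * κ x j
      = p t i * (∑ x, κ j x * γ t x) - γ t i * (∑ x, κ j x * p t x) := by
    rw [Finset.mul_sum, Finset.mul_sum, ← Finset.sum_sub_distrib]
    exact Finset.sum_congr rfl fun x _ => by rw [h2 x j]; ring
  have S3 : ∑ x, κ i x * (p t x * γ t j + γ t x * p t j)
      = γ t j * (∑ x, κ i x * p t x) + p t j * (∑ x, κ i x * γ t x) := by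
    rw [Finset.mul_sum, Finset.mul_sum, ← Finset.sum_add_distrib]
    exact Finset.sum_congr rfl fun x _ => by ring
  have S4 : ∑ x, (p t i * γ t x + γ t i * p t x) * κ x j
      = -(p t i * (∑ x, κ j x * γ t x)) - γ t i * (∑ x, κ j x * p t x) := by
    rw [Finset.mul_sum, Finset.mul_sum, ← Finset.sum_neg_distrib, ← Finset.sum_sub_distrib]
    exact Finset.sum_congr rfl fun x _ => by rw [h2 x j]; ring
  rw [S1, S2, S3, S4]; ring
end

section
/- For every ξ ∈ so(n) with [ξ, κ] = 0, the function tr(ξᵀ Φ_s), where Φ_s = γ∧p + (s/2)(κ γγᵀ + γγᵀ κ), is a first integral of the system γ' = p, p' = sκp + μγ. -/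
/-- The entrywise derivative identity used in the Noether computation. -/
lemma magDeriv_eq (n : ℕ) (κ : Matrix (Fin n) (Fin n) ℝ) (hκ : κ.transpose = -κ)
    (s μ : ℝ) (γ p : Fin n → ℝ) (i j : Fin n) :
    p i * p j + γ i * (s * κ.mulVec p j + μ * γ j)
      - ((s * κ.mulVec p i + μ * γ i) * γ j + p i * p j)
      + (s / 2) * ((∑ k, κ i k * (p k * γ j + γ k * p j))
          + ∑ k, (p i * γ k + γ i * p k) * κ k j)
    = ((s / 2) • (κ * (Matrix.vecMulVec γ p - Matrix.vecMulVec p γ)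
        - (Matrix.vecMulVec γ p - Matrix.vecMulVec p γ) * κ)) i j := by
  have hκ' : ∀ a b, κ a b = - κ b a := by
    intro a b
    have := congrFun (congrFun hκ b) a
    simpa using this
  have hswap : ∀ a, κ.mulVec p a = ∑ k, -(κ k a) * p k := by
    intro a
    simp only [Matrix.mulVec, dotProduct]
    exact Finset.sum_congr rfl fun k _ => by rw [hκ' a k]
  have hrhs : ((s / 2) • (κ * (Matrix.vecMulVec γ p - Matrix.vecMulVec p γ)
        - (Matrix.vecMulVec γ p - Matrix.vecMulVec p γ) * κ)) i j
      = (s / 2) * ((∑ k, κ i k * (γ k * p j - p k * γ j))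
          - ∑ k, (γ i * p k - p i * γ k) * κ k j) := by
    simp [Matrix.mul_apply, Matrix.sub_apply, Matrix.vecMulVec_apply,
      Finset.mul_sum, Finset.sum_sub_distrib, mul_sub, sub_mul]
  rw [hrhs, hswap j, hswap i]
  trans (∑ k, (γ i * (s * (-(κ k j) * p k)) - s * (-(κ k i) * p k) * γ j
      + ((s / 2) * (κ i k * (p k * γ j + γ k * p j))
        + (s / 2) * ((p i * γ k + γ i * p k) * κ k j))))
  · simp only [Finset.sum_add_distrib, Finset.sum_sub_distrib, ← Finset.mul_sum,
      ← Finset.sum_mul]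
    ring
  trans (∑ k, ((s / 2) * (κ i k * (γ k * p j - p k * γ j))
      - (s / 2) * ((γ i * p k - p i * γ k) * κ k j)))
  · refine Finset.sum_congr rfl fun k _ => ?_
    rw [hκ' k i]
    ring
  · simp only [Finset.sum_sub_distrib, ← Finset.mul_sum]
    ring

/-- for every `ξ ∈ so(n)` with `[ξ,κ] = 0`, the function
`tr(ξᵀ Φ_s)` is a first integral of `γ' = p`, `p' = sκp + μγ`. -/
theorem magnetic_noether_integral
    (n : ℕ) (γ p : ℝ → Fin n → ℝ) (κ ξ : Matrix (Fin n) (Fin n) ℝ)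
    (hκ : κ.transpose = -κ) (hξ : ξ.transpose = -ξ) (hcomm : ξ * κ = κ * ξ)
    (s : ℝ) (μ : ℝ → ℝ)
    (hγ : ∀ i t, HasDerivAt (fun τ => γ τ i) (p t i) t)
    (hp : ∀ i t, HasDerivAt (fun τ => p τ i)
      (s * κ.mulVec (p t) i + μ t * γ t i) t) :
    ∀ t, HasDerivAt (fun τ =>
      Matrix.trace (ξ.transpose * magMomentum s κ (γ τ) (p τ))) 0 t := by
  intro t
  set C : Matrix (Fin n) (Fin n) ℝ :=
    Matrix.vecMulVec (γ t) (p t) - Matrix.vecMulVec (p t) (γ t) with hC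
  set M : Matrix (Fin n) (Fin n) ℝ := (s / 2) • (κ * C - C * κ) with hM
  -- entrywise derivative of the momentum map
  have hder : ∀ i j, HasDerivAt (fun τ => magMomentum s κ (γ τ) (p τ) i j)
      (M i j) t := by
    intro i j
    have h1 : HasDerivAt (fun τ => γ τ i * p τ j - p τ i * γ τ j
        + (s / 2) * ((∑ k, κ i k * (γ τ k * γ τ j))
            + ∑ k, (γ τ i * γ τ k) * κ k j))
        (p t i * p t j + γ t i * (s * κ.mulVec (p t) j + μ t * γ t j)
          - ((s * κ.mulVec (p t) i + μ t * γ t i) * γ t j + p t i * p t j)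
          + (s / 2) * ((∑ k, κ i k * (p t k * γ t j + γ t k * p t j))
              + ∑ k, (p t i * γ t k + γ t i * p t k) * κ k j)) t := by
      refine HasDerivAt.add (((hγ i t).mul (hp j t)).sub ((hp i t).mul (hγ j t))) ?_
      refine HasDerivAt.const_mul _ (HasDerivAt.add ?_ ?_)
      · exact HasDerivAt.fun_sum fun k _ => ((hγ k t).mul (hγ j t)).const_mul (κ i k)
      · exact HasDerivAt.fun_sum fun k _ => ((hγ i t).mul (hγ k t)).mul_const (κ k j)
    rw [hM, hC]
    rw [← magDeriv_eq n κ hκ s (μ t) (γ t) (p t) i j]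
    refine h1.congr_of_eventuallyEq (Filter.Eventually.of_forall fun τ => ?_)
    simp [magMomentum, Matrix.sub_apply, Matrix.add_apply, Matrix.smul_apply,
      Matrix.mul_apply, Matrix.vecMulVec_apply, smul_eq_mul, mul_add]
  -- derivative of the trace
  have htr : HasDerivAt (fun τ =>
      Matrix.trace (ξ.transpose * magMomentum s κ (γ τ) (p τ)))
      (Matrix.trace (ξ.transpose * M)) t := by
    have h2 : HasDerivAt (fun τ => ∑ i, ∑ j,
        ξ.transpose i j * magMomentum s κ (γ τ) (p τ) j i)
        (∑ i, ∑ j, ξ.transpose i j * M j i) t :=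
      HasDerivAt.fun_sum fun i _ => HasDerivAt.fun_sum fun j _ =>
        (hder j i).const_mul (ξ.transpose i j)
    have h3 : ∀ N : Matrix (Fin n) (Fin n) ℝ, Matrix.trace (ξ.transpose * N)
        = ∑ i, ∑ j, ξ.transpose i j * N j i := by
      intro N
      simp [Matrix.trace, Matrix.mul_apply, Matrix.diag]
    simp only [h3]
    exact h2
  -- the trace of ξᵀ M vanishes
  have hzero : Matrix.trace (ξ.transpose * M) = 0 := by
    have hξκ : ξ.transpose * κ = κ * ξ.transpose := by
      rw [hξ, Matrix.neg_mul, Matrix.mul_neg, hcomm]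
    have : ξ.transpose * (κ * C - C * κ)
        = (ξ.transpose * κ) * C - ξ.transpose * (C * κ) := by
      rw [Matrix.mul_sub, Matrix.mul_assoc]
    rw [hM, Matrix.mul_smul, Matrix.trace_smul, this, hξκ]
    have h4 : Matrix.trace (ξ.transpose * (C * κ))
        = Matrix.trace (κ * ξ.transpose * C) := by
      rw [← Matrix.mul_assoc, Matrix.trace_mul_comm, ← Matrix.mul_assoc]
    rw [Matrix.trace_sub, h4, Matrix.mul_assoc, sub_self, smul_zero]
  rw [← hzero]
  exact htr
end

section
/- The function J = s² Σᵢ κ_{2i−1,2i}² (p_{2i−1}² + p_{2i}²) − μ², with μ = s⟨p,κγ⟩ − ⟨p,p⟩, is a first integral of the magnetic geodesic system γ' = p, p' = sκp + μγ on {⟨γ,γ⟩ = 1, ⟨p,γ⟩ = 0}, where κ is block-diagonal as in (κ = Σ κ_{2i−1,2i} e_{2i−1}∧e_{2i}). -/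
/-- `J = s²Σᵢκ²_{2i−1,2i}(p²_{2i−1} + p²_{2i}) − μ²`, with
`μ = s⟨p,κγ⟩ − ⟨p,p⟩`, is a first integral of the block magnetic geodesic
system on `{⟨γ,γ⟩ = 1, ⟨p,γ⟩ = 0}`. Here `γ1 i, γ2 i, p1 i, p2 i` denote
`γ_{2i−1}, γ_{2i}, p_{2i−1}, p_{2i}` and `κ i` denotes `κ_{2i−1,2i}`, so that
`⟨p,κγ⟩ = Σᵢ κᵢ(p_{2i−1}γ_{2i} − p_{2i}γ_{2i−1})`. -/
theorem J_first_integral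
    (ℓ : ℕ) (γ1 γ2 p1 p2 : ℝ → Fin ℓ → ℝ) (κ : Fin ℓ → ℝ) (s : ℝ)
    (μ : ℝ → ℝ)
    (hμ : ∀ t, μ t = s * (∑ i, κ i * (p1 t i * γ2 t i - p2 t i * γ1 t i))
      - ∑ i, ((p1 t i) ^ 2 + (p2 t i) ^ 2))
    (hγ1 : ∀ i t, HasDerivAt (fun τ => γ1 τ i) (p1 t i) t)
    (hγ2 : ∀ i t, HasDerivAt (fun τ => γ2 τ i) (p2 t i) t)
    (hp1 : ∀ i t, HasDerivAt (fun τ => p1 τ i) (s * κ i * p2 t i + μ t * γ1 t i) t)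
    (hp2 : ∀ i t, HasDerivAt (fun τ => p2 τ i) (-(s * κ i * p1 t i) + μ t * γ2 t i) t)
    (hnorm : ∀ t, ∑ i, ((γ1 t i) ^ 2 + (γ2 t i) ^ 2) = 1)
    (hperp : ∀ t, ∑ i, (p1 t i * γ1 t i + p2 t i * γ2 t i) = 0) :
    ∀ t, HasDerivAt (fun τ =>
      s ^ 2 * (∑ i, (κ i) ^ 2 * ((p1 τ i) ^ 2 + (p2 τ i) ^ 2)) - (μ τ) ^ 2) 0 t := by
  intro t
  set D := ∑ i, (κ i) ^ 2 * (p1 t i * γ1 t i + p2 t i * γ2 t i) with hD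
  -- derivative of the κ²-weighted kinetic sum
  have h1 : HasDerivAt (fun τ => ∑ i, (κ i) ^ 2 * ((p1 τ i) ^ 2 + (p2 τ i) ^ 2))
      (2 * μ t * D) t := by
    have h := HasDerivAt.fun_sum (u := Finset.univ)
      (fun i _ => (((hp1 i t).pow 2).add ((hp2 i t).pow 2)).const_mul ((κ i) ^ 2))
    refine h.congr_deriv ?_
    rw [hD, Finset.mul_sum]
    refine Finset.sum_congr rfl fun i _ => ?_
    push_cast
    ring
  -- derivative of μ
  have h2 : HasDerivAt μ (s ^ 2 * D) t := by
    have hfun : μ = fun τ => s * (∑ i, κ i * (p1 τ i * γ2 τ i - p2 τ i * γ1 τ i))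
        - ∑ i, ((p1 τ i) ^ 2 + (p2 τ i) ^ 2) := funext hμ
    rw [hfun]
    have hA := HasDerivAt.fun_sum (u := Finset.univ)
      (fun i _ => (((hp1 i t).mul (hγ2 i t)).sub ((hp2 i t).mul (hγ1 i t))).const_mul (κ i))
    have hB := HasDerivAt.fun_sum (u := Finset.univ)
      (fun i _ => ((hp1 i t).pow 2).add ((hp2 i t).pow 2))
    have h := (hA.const_mul s).sub hB
    refine h.congr_deriv ?_
    have e1 : ∑ i, κ i * ((s * κ i * p2 t i + μ t * γ1 t i) * γ2 t i + p1 t i * p2 t i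
        - ((-(s * κ i * p1 t i) + μ t * γ2 t i) * γ1 t i + p2 t i * p1 t i)) = s * D := by
      rw [hD, Finset.mul_sum]
      refine Finset.sum_congr rfl fun i _ => ?_
      ring
    have e2 : ∑ i, ((2 : ℕ) * p1 t i ^ (2 - 1) * (s * κ i * p2 t i + μ t * γ1 t i)
        + (2 : ℕ) * p2 t i ^ (2 - 1) * (-(s * κ i * p1 t i) + μ t * γ2 t i))
        = 2 * μ t * ∑ i, (p1 t i * γ1 t i + p2 t i * γ2 t i) := by
      rw [Finset.mul_sum]
      refine Finset.sum_congr rfl fun i _ => ?_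
      push_cast
      ring
    rw [e1, e2, hperp t]
    ring
  have h := (h1.const_mul (s ^ 2)).sub (h2.pow 2)
  refine h.congr_deriv ?_
  push_cast
  ring
end

section
/- If two block parameters vanish, κ_{2i−1,2i} = κ_{2j−1,2j} = 0, then the six functions Φ_{a,b} = γ_a p_b − γ_b p_a for a < b in {2i−1, 2i, 2j−1, 2j} are first integrals of the magnetic system γ' = p, p' = sκp + μγ, and under the canonical Poisson bracket {γ_a, p_b} = δ_{ab} they close into a Lie algebra isomorphic to so(4). -/
/-- Canonical phase space `ℝ^{2n}` with points `(γ, p)`. -/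
abbrev CanPhase (n : ℕ) : Type := (Fin n → ℝ) × (Fin n → ℝ)

/-- Partial derivative in `γ_k`. -/
noncomputable def pdGamma {n : ℕ} (F : CanPhase n → ℝ) (x : CanPhase n) (k : Fin n) : ℝ :=
  deriv (fun u => F (Function.update x.1 k u, x.2)) (x.1 k)

/-- Partial derivative in `p_k`. -/
noncomputable def pdP {n : ℕ} (F : CanPhase n → ℝ) (x : CanPhase n) (k : Fin n) : ℝ :=
  deriv (fun u => F (x.1, Function.update x.2 k u)) (x.2 k)

/-- The canonical Poisson bracket `{γ_a, p_b} = δ_{ab}` on `ℝ^{2n}`. -/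
noncomputable def canPB {n : ℕ} (F G : CanPhase n → ℝ) : CanPhase n → ℝ := fun x =>
  ∑ k, (pdGamma F x k * pdP G x k - pdP F x k * pdGamma G x k)

/-- The angular momentum `Φ_{a,b} = γ_a p_b − γ_b p_a`. -/
noncomputable def PhiAB {n : ℕ} (a b : Fin n) : CanPhase n → ℝ := fun x =>
  x.1 a * x.2 b - x.1 b * x.2 a

/-- Linear embedding of `4×4` matrices into functions on phase space. -/
noncomputable def phiM {n : ℕ} (e : Fin 4 → Fin n) (X : Matrix (Fin 4) (Fin 4) ℝ) :
    CanPhase n → ℝ := fun x => ∑ u, ∑ v, X v u * x.1 (e u) * x.2 (e v)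

lemma pdGamma_phiM {n : ℕ} (e : Fin 4 → Fin n) (X : Matrix (Fin 4) (Fin 4) ℝ)
    (x : CanPhase n) (k : Fin n) :
    pdGamma (phiM e X) x k = ∑ u, ∑ v, (if e u = k then X v u * x.2 (e v) else 0) := by
  have h : HasDerivAt (fun t => ∑ u : Fin 4, ∑ v : Fin 4,
      X v u * Function.update x.1 k t (e u) * x.2 (e v))
      (∑ u, ∑ v, (if e u = k then X v u * x.2 (e v) else 0)) (x.1 k) := by
    apply HasDerivAt.fun_sum
    intro u _
    apply HasDerivAt.fun_sum
    intro v _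
    by_cases h : e u = k
    · simp only [Function.update_apply, h, if_pos rfl]
      simpa using ((hasDerivAt_id (x.1 k)).const_mul (X v u)).mul_const (x.2 (e v))
    · simp only [Function.update_apply, if_neg h]
      exact hasDerivAt_const _ _
  exact h.deriv

lemma pdP_phiM {n : ℕ} (e : Fin 4 → Fin n) (X : Matrix (Fin 4) (Fin 4) ℝ)
    (x : CanPhase n) (k : Fin n) :
    pdP (phiM e X) x k = ∑ u, ∑ v, (if e v = k then X v u * x.1 (e u) else 0) := by
  have h : HasDerivAt (fun t => ∑ u : Fin 4, ∑ v : Fin 4,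
      X v u * x.1 (e u) * Function.update x.2 k t (e v))
      (∑ u, ∑ v, (if e v = k then X v u * x.1 (e u) else 0)) (x.2 k) := by
    apply HasDerivAt.fun_sum
    intro u _
    apply HasDerivAt.fun_sum
    intro v _
    by_cases h : e v = k
    · simp only [Function.update_apply, h, if_pos rfl]
      simpa using (hasDerivAt_id (x.2 k)).const_mul (X v u * x.1 (e u))
    · simp only [Function.update_apply, if_neg h]
      exact hasDerivAt_const _ _
  exact h.deriv

set_option maxHeartbeats 1000000 in
lemma canPB_phiM {n : ℕ} (e : Fin 4 → Fin n) (he : Function.Injective e)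
    (X Y : Matrix (Fin 4) (Fin 4) ℝ) :
    canPB (phiM e X) (phiM e Y) = phiM e (X * Y - Y * X) := by
  funext x
  simp only [canPB, pdGamma_phiM, pdP_phiM]
  rw [← Finset.sum_subset (Finset.subset_univ (Finset.image e Finset.univ))
    (fun k _ hk => by
      have h0 : ∀ u : Fin 4, e u ≠ k := fun u h =>
        hk (Finset.mem_image.2 ⟨u, Finset.mem_univ u, h⟩)
      simp [h0])]
  rw [Finset.sum_image (fun u _ v _ h => he h)]
  simp only [he.eq_iff]
  simp only [Fin.sum_univ_four]
  simp only [Fin.reduceEq, if_false, if_true, reduceIte, add_zero, zero_add]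
  simp only [phiM, Matrix.sub_apply, Matrix.mul_apply, Fin.sum_univ_four]
  ring

lemma phiM_add {n : ℕ} (e : Fin 4 → Fin n) (X Y : Matrix (Fin 4) (Fin 4) ℝ) :
    phiM e (X + Y) = phiM e X + phiM e Y := by
  funext x
  simp [phiM, add_mul, Finset.sum_add_distrib]

lemma phiM_smul {n : ℕ} (e : Fin 4 → Fin n) (r : ℝ) (X : Matrix (Fin 4) (Fin 4) ℝ) :
    phiM e (r • X) = r • phiM e X := by
  funext x
  simp [phiM, Finset.mul_sum, mul_assoc]

lemma phiM_eval {n : ℕ} (e : Fin 4 → Fin n) (he : Function.Injective e)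
    (X : Matrix (Fin 4) (Fin 4) ℝ) (u v : Fin 4) :
    phiM e X ((fun m => if m = e u then 1 else 0), (fun m => if m = e v then 1 else 0)) =
      X v u := by
  simp only [phiM, he.eq_iff]
  simp [Fin.sum_univ_four, he.eq_iff, mul_ite, ite_mul, mul_one, mul_zero, zero_mul,
    Finset.sum_ite_eq', Finset.mem_univ]

lemma phiM_inj {n : ℕ} (e : Fin 4 → Fin n) (he : Function.Injective e) :
    Function.Injective (phiM (n := n) e) := by
  intro X Y h
  ext i j
  have := congrFun h ((fun m => if m = e j then 1 else 0), (fun m => if m = e i then 1 else 0))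
  rwa [phiM_eval e he, phiM_eval e he] at this

lemma phiM_B {n : ℕ} (e : Fin 4 → Fin n) (u v : Fin 4) :
    phiM e (Matrix.single v u 1 - Matrix.single u v 1) =
      PhiAB (e u) (e v) := by
  funext x
  simp only [phiM, PhiAB, Matrix.sub_apply]
  fin_cases u <;> fin_cases v <;>
    simp [Fin.sum_univ_four, Matrix.single, Matrix.of_apply] <;> ring

lemma skew_B (u v : Fin 4) :
    (Matrix.single v u (1:ℝ) - Matrix.single u v 1).transpose =
      -(Matrix.single v u (1:ℝ) - Matrix.single u v 1) := by
  ext i j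
  simp [Matrix.transpose_apply, Matrix.single, and_comm]

lemma phiM_decomp {n : ℕ} (e : Fin 4 → Fin n) (X : Matrix (Fin 4) (Fin 4) ℝ)
    (hX : X.transpose = -X) :
    phiM e X = X 1 0 • PhiAB (e 0) (e 1) + X 2 0 • PhiAB (e 0) (e 2) +
      X 3 0 • PhiAB (e 0) (e 3) + X 2 1 • PhiAB (e 1) (e 2) +
      X 3 1 • PhiAB (e 1) (e 3) + X 3 2 • PhiAB (e 2) (e 3) := by
  have hs : ∀ u v : Fin 4, X u v + X v u = 0 := by
    intro u v
    have := congrFun (congrFun hX u) v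
    simp only [Matrix.transpose_apply, Matrix.neg_apply] at this
    linarith
  funext x
  simp only [phiM, PhiAB, Fin.sum_univ_four, Pi.add_apply, Pi.smul_apply, smul_eq_mul]
  linear_combination x.1 (e 1) * x.2 (e 0) * hs 0 1 + x.1 (e 2) * x.2 (e 0) * hs 0 2 +
    x.1 (e 3) * x.2 (e 0) * hs 0 3 + x.1 (e 2) * x.2 (e 1) * hs 1 2 +
    x.1 (e 3) * x.2 (e 1) * hs 1 3 + x.1 (e 3) * x.2 (e 2) * hs 2 3 +
    (x.1 (e 0) * x.2 (e 0) / 2) * hs 0 0 + (x.1 (e 1) * x.2 (e 1) / 2) * hs 1 1 +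
    (x.1 (e 2) * x.2 (e 2) / 2) * hs 2 2 + (x.1 (e 3) * x.2 (e 3) / 2) * hs 3 3

/-- The submodule of skew-symmetric `4×4` real matrices. -/
def skewSub : Submodule ℝ (Matrix (Fin 4) (Fin 4) ℝ) where
  carrier := {X | X.transpose = -X}
  add_mem' := by
    intro X Y hX hY
    simp only [Set.mem_setOf_eq] at *
    rw [Matrix.transpose_add, hX, hY, neg_add]
  zero_mem' := by simp
  smul_mem' := by
    intro r X hX
    simp only [Set.mem_setOf_eq] at *
    rw [Matrix.transpose_smul, hX, smul_neg]

/-- `phiM e` as a linear map. -/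
noncomputable def phiL {n : ℕ} (e : Fin 4 → Fin n) :
    Matrix (Fin 4) (Fin 4) ℝ →ₗ[ℝ] (CanPhase n → ℝ) where
  toFun := phiM e
  map_add' := phiM_add e
  map_smul' := phiM_smul e

/-- if two block parameters vanish (κ annihilates the four
coordinates `a = 2i−1, b = 2i, c = 2j−1, d = 2j`), the six functions
`Φ_{x,y} = γ_x p_y − γ_y p_x` (`x < y` in `{a,b,c,d}`) are first integrals of
`γ' = p`, `p' = sκp + μγ`, and under the canonical Poisson bracket they close
into a Lie algebra isomorphic to `so(4)`. -/
theorem six_integrals_so4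
    (n : ℕ) (γ p : ℝ → Fin n → ℝ) (κ : Matrix (Fin n) (Fin n) ℝ)
    (hκ : κ.transpose = -κ) (s : ℝ) (μ : ℝ → ℝ)
    (a b c d : Fin n)
    (hdistinct : a ≠ b ∧ a ≠ c ∧ a ≠ d ∧ b ≠ c ∧ b ≠ d ∧ c ≠ d)
    (hzero : ∀ e ∈ ({a, b, c, d} : Set (Fin n)), ∀ k, κ e k = 0 ∧ κ k e = 0)
    (hγ : ∀ i t, HasDerivAt (fun τ => γ τ i) (p t i) t)
    (hp : ∀ i t, HasDerivAt (fun τ => p τ i)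
      (s * κ.mulVec (p t) i + μ t * γ t i) t) :
    (∀ x ∈ ({a, b, c, d} : Set (Fin n)), ∀ y ∈ ({a, b, c, d} : Set (Fin n)),
      ∀ t, HasDerivAt (fun τ => γ τ x * p τ y - γ τ y * p τ x) 0 t) ∧
    (let S : Set (CanPhase n → ℝ) :=
      {PhiAB a b, PhiAB a c, PhiAB a d, PhiAB b c, PhiAB b d, PhiAB c d}
     (∀ F ∈ S, ∀ G ∈ S, canPB F G ∈ Submodule.span ℝ S) ∧
     (∃ φ : Matrix (Fin 4) (Fin 4) ℝ → (CanPhase n → ℝ),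
       Set.InjOn φ {X | X.transpose = -X} ∧
       (∀ X Y, X.transpose = -X → Y.transpose = -Y → φ (X + Y) = φ X + φ Y) ∧
       (∀ (r : ℝ) (X), X.transpose = -X → φ (r • X) = r • φ X) ∧
       (∀ X Y, X.transpose = -X → Y.transpose = -Y →
         φ (X * Y - Y * X) = canPB (φ X) (φ Y)) ∧
       φ '' {X | X.transpose = -X} = (Submodule.span ℝ S : Set (CanPhase n → ℝ)))) := by
  obtain ⟨hab, hac, had, hbc, hbd, hcd⟩ := hdistinct
  -- the embedding of the four indices
  have he : Function.Injective (![a, b, c, d] : Fin 4 → Fin n) := by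
    intro u v h
    fin_cases u <;> fin_cases v <;> simp at h ⊢ <;>
      exact absurd h (by first
        | exact hab | exact hac | exact had | exact hbc | exact hbd | exact hcd
        | exact hab.symm | exact hac.symm | exact had.symm
        | exact hbc.symm | exact hbd.symm | exact hcd.symm)
  constructor
  · -- first integrals
    intro x hx y hy t
    have hzx : ∀ k, κ x k = 0 := fun k => (hzero x hx k).1
    have hzy : ∀ k, κ y k = 0 := fun k => (hzero y hy k).1
    have hmx : κ.mulVec (p t) x = 0 := by simp [Matrix.mulVec, dotProduct, hzx]
    have hmy : κ.mulVec (p t) y = 0 := by simp [Matrix.mulVec, dotProduct, hzy]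
    have h := ((hγ x t).mul (hp y t)).sub ((hγ y t).mul (hp x t))
    convert h using 1
    case e'_4 => rfl
    case e'_5 => rfl
    case e'_8 => rfl
    rw [hmx, hmy]
    ring
  intro S
  -- representation of the generators
  have hrep : ∀ F ∈ S, ∃ X : Matrix (Fin 4) (Fin 4) ℝ,
      X.transpose = -X ∧ phiM ![a, b, c, d] X = F := by
    intro F hF
    simp only [S, Set.mem_insert_iff, Set.mem_singleton_iff] at hF
    rcases hF with rfl | rfl | rfl | rfl | rfl | rfl
    · exact ⟨_, skew_B 0 1, phiM_B ![a, b, c, d] 0 1⟩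
    · exact ⟨_, skew_B 0 2, phiM_B ![a, b, c, d] 0 2⟩
    · exact ⟨_, skew_B 0 3, phiM_B ![a, b, c, d] 0 3⟩
    · exact ⟨_, skew_B 1 2, phiM_B ![a, b, c, d] 1 2⟩
    · exact ⟨_, skew_B 1 3, phiM_B ![a, b, c, d] 1 3⟩
    · exact ⟨_, skew_B 2 3, phiM_B ![a, b, c, d] 2 3⟩
  -- membership of the six generators in S
  have hmem : ∀ u v : Fin 4, u < v → PhiAB (![a, b, c, d] u) (![a, b, c, d] v) ∈ S := by
    intro u v huv
    fin_cases u <;> fin_cases v <;> simp_all [S, Set.mem_insert_iff]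
  -- skew matrices map into the span of S
  have hspan : ∀ X : Matrix (Fin 4) (Fin 4) ℝ, X.transpose = -X →
      phiM ![a, b, c, d] X ∈ Submodule.span ℝ S := by
    intro X hX
    rw [phiM_decomp ![a, b, c, d] X hX]
    refine Submodule.add_mem _ (Submodule.add_mem _ (Submodule.add_mem _ (Submodule.add_mem _
      (Submodule.add_mem _ ?_ ?_) ?_) ?_) ?_) ?_ <;>
      exact Submodule.smul_mem _ _ (Submodule.subset_span (by
        first
        | exact hmem 0 1 (by decide) | exact hmem 0 2 (by decide)
        | exact hmem 0 3 (by decide) | exact hmem 1 2 (by decide)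
        | exact hmem 1 3 (by decide) | exact hmem 2 3 (by decide)))
  constructor
  · -- closure of the bracket
    intro F hF G hG
    obtain ⟨X, hX, rfl⟩ := hrep F hF
    obtain ⟨Y, hY, rfl⟩ := hrep G hG
    rw [canPB_phiM ![a, b, c, d] he]
    apply hspan
    rw [Matrix.transpose_sub, Matrix.transpose_mul, Matrix.transpose_mul, hX, hY]
    noncomm_ring
  · -- the Lie algebra isomorphism with so(4)
    refine ⟨phiM ![a, b, c, d], ?_, ?_, ?_, ?_, ?_⟩
    · exact fun X _ Y _ h => phiM_inj _ he h
    · exact fun X Y _ _ => phiM_add _ X Y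
    · exact fun r X _ => phiM_smul _ r X
    · exact fun X Y _ _ => (canPB_phiM _ he X Y).symm
    · apply Set.Subset.antisymm
      · rintro F ⟨X, hX, rfl⟩
        exact hspan X hX
      · intro F hF
        have hle : Submodule.span ℝ S ≤ Submodule.map (phiL ![a, b, c, d]) skewSub :=
          Submodule.span_le.2 (fun G hG => by
            obtain ⟨X, hX, hXG⟩ := hrep G hG
            exact ⟨X, hX, hXG⟩)
        obtain ⟨X, hX, rfl⟩ := hle hF
        exact ⟨X, hX, rfl⟩
end
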